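/- Weakening of block-element safety: suppose ⊢ Σ,Σ' sig, ⊢ Σ,Ω sig, dom(Σ') ∩ dom(Ω) = ∅, dom(Σ,Ω,Σ') ∩ S = ∅, no declaration of K mentions a sort in dom(Ω), S⟨K⟩ preserves subsorting of Σ,Σ', (c : A → s) ∈ K, and Σ,Σ'; S ⊢ K ∋ (c : A → s) safe. Then Σ,Ω,Σ'; S ⊢ K ∋ (c : A → s) safe. -/
import Mathlib


set_option maxHeartbeats 1000000

/-! ## Names -/

abbrev SortName := String
abbrev ConName := String
abbrev DataName := String
abbrev Var := String

/-! ## Types -/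

inductive Ty : Type
  | unit : Ty
  | arr : Ty → Ty → Ty
  | prod : Ty → Ty → Ty
  | sort : SortName → Ty
  | inter : Ty → Ty → Ty
  deriving DecidableEq

inductive UTy : Type
  | unit : UTy
  | arr : UTy → UTy → UTy
  | prod : UTy → UTy → UTy
  | data : DataName → UTy
  deriving DecidableEq

/-! ## Signatures -/

inductive Decl : Type
  | subsort : SortName → SortName → Decl
  | con : ConName → Ty → SortName → Decl
  deriving DecidableEq

structure Block : Type where
  sorts : List (SortName × DataName)
  decls : List Decl
  deriving DecidableEq

/-- A signature is a finite sequence of blocks (later blocks to the right). -/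
abbrev Sig := List Block

def Block.domS (b : Block) : List SortName := b.sorts.map Prod.fst

def sigDom (Sgn : Sig) : List SortName := Sgn.foldr (fun b acc => b.domS ++ acc) []

def declaresSub (Sgn : Sig) (s1 s2 : SortName) : Prop :=
  ∃ b ∈ Sgn, Decl.subsort s1 s2 ∈ b.decls

def declaresCon (Sgn : Sig) (c : ConName) (A : Ty) (s : SortName) : Prop :=
  ∃ b ∈ Sgn, Decl.con c A s ∈ b.decls

def declaresSort (Sgn : Sig) (s : SortName) (d : DataName) : Prop :=
  ∃ b ∈ Sgn, (s, d) ∈ b.sorts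

/-! ## Subsorting and subtyping -/

inductive Subsort (Sgn : Sig) : SortName → SortName → Prop
  | assum {s1 s2} : declaresSub Sgn s1 s2 → Subsort Sgn s1 s2
  | refl {s} : s ∈ sigDom Sgn → Subsort Sgn s s
  | trans {s1 s2 s3} : Subsort Sgn s1 s2 → Subsort Sgn s2 s3 → Subsort Sgn s1 s3

inductive Subty (Sgn : Sig) : Ty → Ty → Prop
  | unit : Subty Sgn .unit .unit
  | prod {A1 A2 B1 B2} : Subty Sgn A1 B1 → Subty Sgn A2 B2 →
      Subty Sgn (.prod A1 A2) (.prod B1 B2)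
  | sort {s t} : Subsort Sgn s t → Subty Sgn (.sort s) (.sort t)
  | arr {A1 A2 B1 B2} : Subty Sgn B1 A1 → Subty Sgn A2 B2 →
      Subty Sgn (.arr A1 A2) (.arr B1 B2)
  | interL1 {A1 A2 B} : Subty Sgn A1 B → Subty Sgn (.inter A1 A2) B
  | interL2 {A1 A2 B} : Subty Sgn A2 B → Subty Sgn (.inter A1 A2) B
  | interR {A B1 B2} : Subty Sgn A B1 → Subty Sgn A B2 → Subty Sgn A (.inter B1 B2)

/-! ## Unrefined signature, refinement, well-formedness -/

/-- The unrefined signature Ψ: each constructor has a unique typing c : τ → d. -/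
structure UrSig : Type where
  cons : List (ConName × UTy × DataName)
  unique : ∀ c t1 d1 t2 d2, (c, t1, d1) ∈ cons → (c, t2, d2) ∈ cons → t1 = t2 ∧ d1 = d2

def UrSig.typing (Psi : UrSig) (c : ConName) (t : UTy) (d : DataName) : Prop :=
  (c, t, d) ∈ Psi.cons

inductive Refines (Sgn : Sig) : Ty → UTy → Prop
  | unit : Refines Sgn .unit .unit
  | arr {A1 A2 t1 t2} : Refines Sgn A1 t1 → Refines Sgn A2 t2 →
      Refines Sgn (.arr A1 A2) (.arr t1 t2)
  | prod {A1 A2 t1 t2} : Refines Sgn A1 t1 → Refines Sgn A2 t2 →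
      Refines Sgn (.prod A1 A2) (.prod t1 t2)
  | sort {s d} : declaresSort Sgn s d → Refines Sgn (.sort s) (.data d)
  | inter {A1 A2 t} : Refines Sgn A1 t → Refines Sgn A2 t → Refines Sgn (.inter A1 A2) t

inductive TypeWF (Sgn : Sig) : Ty → Prop
  | unit : TypeWF Sgn .unit
  | arr {A1 A2} : TypeWF Sgn A1 → TypeWF Sgn A2 → TypeWF Sgn (.arr A1 A2)
  | prod {A1 A2} : TypeWF Sgn A1 → TypeWF Sgn A2 → TypeWF Sgn (.prod A1 A2)
  | sort {s} : s ∈ sigDom Sgn → TypeWF Sgn (.sort s)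
  | inter {A1 A2 t} : TypeWF Sgn A1 → TypeWF Sgn A2 →
      Refines Sgn A1 t → Refines Sgn A2 t → TypeWF Sgn (.inter A1 A2)

/-- Σ ⊢ c : A → s contype. -/
def ConTypeWF (Psi : UrSig) (Sgn : Sig) (c : ConName) (A : Ty) (s : SortName) : Prop :=
  TypeWF Sgn A ∧ TypeWF Sgn (.sort s) ∧
    ∃ t d, Psi.typing c t d ∧ Refines Sgn (.arr A (.sort s)) (.arr t (.data d))

/-- Constructor typing Σ ⊢ c : A → s. -/
def ConTyping (Sgn : Sig) (c : ConName) (A : Ty) (s : SortName) : Prop :=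
  ∃ s', declaresCon Sgn c A s' ∧ Subsort Sgn s' s

/-! ## Signature well-formedness -/

/-- safe(Σ; blk; c : A→s at t). -/
def SafeConAt (Sgn : Sig) (blk : Block) (c : ConName) (A : Ty) (s t : SortName) : Prop :=
  ∃ A' s', declaresCon Sgn c A' s' ∧ Subsort (Sgn ++ [blk]) s' t ∧
    Subsort (Sgn ++ [blk]) s s' ∧ Subty (Sgn ++ [blk]) A A'

/-- Σ; S ⊢ K ∋ elem safe, where the block blk is S⟨K⟩. -/
def ElemSafe (Psi : UrSig) (Sgn : Sig) (blk : Block) : Decl → Prop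
  | .subsort s1 s2 =>
      (s1 ∈ sigDom Sgn ∨ s1 ∈ blk.domS) ∧ (s2 ∈ sigDom Sgn ∨ s2 ∈ blk.domS)
  | .con c A s =>
      s ∈ blk.domS ∧ ConTypeWF Psi (Sgn ++ [blk]) c A s ∧
        ∀ t ∈ sigDom Sgn, Subsort (Sgn ++ [blk]) s t → SafeConAt Sgn blk c A s t

inductive SigWF (Psi : UrSig) : Sig → Prop
  | nil : SigWF Psi []
  | block {Sgn blk} :
      SigWF Psi Sgn →
      (∀ s ∈ blk.domS, s ∉ sigDom Sgn) →
      (∀ t1 ∈ sigDom Sgn, ∀ t2 ∈ sigDom Sgn,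
        (Subsort Sgn t1 t2 ↔ Subsort (Sgn ++ [blk]) t1 t2)) →
      (∀ elem ∈ blk.decls, ElemSafe Psi Sgn blk elem) →
      SigWF Psi (Sgn ++ [blk])

/-! ## Preservation of subsorting; non-adjacency; extension -/

/-- Σ' preserves subsorting of Σ. -/
def PreservesSub (Sgn Sgn' : Sig) : Prop :=
  ∀ s ∈ sigDom Sgn, ∀ t ∈ sigDom Sgn, Subsort (Sgn ++ Sgn') s t → Subsort Sgn s t

def Ty.sortsOf : Ty → List SortName
  | .unit => []
  | .arr A B => A.sortsOf ++ B.sortsOf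
  | .prod A B => A.sortsOf ++ B.sortsOf
  | .sort s => [s]
  | .inter A B => A.sortsOf ++ B.sortsOf

def Decl.mentions : Decl → List SortName
  | .subsort s1 s2 => [s1, s2]
  | .con _ A s => A.sortsOf ++ [s]

def Block.mentions (b : Block) : List SortName :=
  b.decls.foldr (fun d acc => d.mentions ++ acc) []

def sigMentions (Sgn : Sig) : List SortName :=
  Sgn.foldr (fun b acc => b.mentions ++ acc) []

/-- Two signature parts are non-adjacent if no declaration of either mentions
a sort declared by the other. -/
def NonAdjacent (Sg1 Sg2 : Sig) : Prop :=
  (∀ s ∈ sigMentions Sg1, s ∉ sigDom Sg2) ∧ (∀ s ∈ sigMentions Sg2, s ∉ sigDom Sg1)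

/-- Σ₊ extends Σ (Σ₊ ≽ Σ): the block sequence of Σ is a subsequence of that of Σ₊. -/
def SigExtends (Sgp Sgn : Sig) : Prop := List.Sublist Sgn Sgp

/-! ## Patterns -/

inductive Pat : Type
  | wild : Pat
  | empty : Pat
  | con : ConName → Pat → Pat
  | pair : Pat → Pat → Pat
  | as_ : Var → Pat → Pat
  | or : Pat → Pat → Pat
  | unit : Pat
  deriving DecidableEq

def Pat.boundVars : Pat → List Var
  | .wild => []
  | .empty => []
  | .unit => []
  | .con _ p => p.boundVars
  | .pair p1 p2 => p1.boundVars ++ p2.boundVars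
  | .as_ x p => x :: p.boundVars
  | .or p1 p2 => p1.boundVars ++ p2.boundVars

/-- Partial pattern intersection p₁ ∩ p₂. -/
def pinter : Pat → Pat → Option Pat
  | .empty, _ => some .empty
  | p, .empty =>
      match p with
      | _ => some .empty
  | .wild, p => some p
  | p, .wild => some p
  | .or p1 p2, p => do
      let q1 ← pinter p1 p
      let q2 ← pinter p2 p
      pure (.or q1 q2)
  | p, .or p1 p2 => do
      let q1 ← pinter p p1
      let q2 ← pinter p p2
      pure (.or q1 q2)
  | .con c1 p1, .con c2 p2 =>
      if c1 = c2 then (pinter p1 p2).map (Pat.con c1) else some .empty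
  | .pair _ _, .con _ _ => some .empty
  | .con _ _, .pair _ _ => some .empty
  | .pair p11 p12, .pair p21 p22 => do
      let q1 ← pinter p11 p21
      let q2 ← pinter p12 p22
      pure (.pair q1 q2)
  | _, _ => none

/-- The constructors of Ψ other than c. -/
def otherCons (Psi : UrSig) (c : ConName) : List ConName :=
  ((Psi.cons.map (fun x => x.1)).filter (fun c' => c' ≠ c)).dedup

/-- Pattern complement ¬p, relative to Ψ (partial). -/
def pcomp (Psi : UrSig) : Pat → Option Pat
  | .wild => some .empty
  | .empty => some .wild
  | .as_ _ p => pcomp Psi p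
  | .pair p1 p2 => do
      let q1 ← pcomp Psi p1
      let q2 ← pcomp Psi p2
      pure (.or (.pair q1 .wild) (.pair .wild q2))
  | .or p1 p2 => do
      let q1 ← pcomp Psi p1
      let q2 ← pcomp Psi p2
      pinter q1 q2
  | .con c p => do
      let q ← pcomp Psi p
      pure ((otherCons Psi c).foldl (fun acc c' => Pat.or acc (Pat.con c' .wild)) (Pat.con c q))
  | .unit => none

/-- Pattern typing Ψ ⊢ p : τ. -/
inductive PatType (Psi : UrSig) : Pat → UTy → Prop
  | wild {t} : PatType Psi .wild t
  | empty {t} : PatType Psi .empty t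
  | as_ {x p t} : PatType Psi p t → PatType Psi (.as_ x p) t
  | unit : PatType Psi .unit .unit
  | or {p1 p2 t} : PatType Psi p1 t → PatType Psi p2 t → PatType Psi (.or p1 p2) t
  | pair {p1 p2 t1 t2} : PatType Psi p1 t1 → PatType Psi p2 t2 →
      PatType Psi (.pair p1 p2) (.prod t1 t2)
  | con {c p t d} : Psi.typing c t d → PatType Psi p t → PatType Psi (.con c p) (.data d)

/-! ## Contexts and the intersect function -/

abbrev Ctx := List (Var × Ty)

/-- Membership in intersect(Σ; A; p): (Γ'; B) is a track of the intersection of A with p. -/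
inductive InIntersect (Sgn : Sig) : Pat → Ty → Ctx → Ty → Prop
  | wild {A} : InIntersect Sgn .wild A [] A
  | as_ {x p A G B} : InIntersect Sgn p A G B →
      InIntersect Sgn (.as_ x p) A (G ++ [(x, B)]) B
  | or1 {p1 p2 A G B} : InIntersect Sgn p1 A G B → InIntersect Sgn (.or p1 p2) A G B
  | or2 {p1 p2 A G B} : InIntersect Sgn p2 A G B → InIntersect Sgn (.or p1 p2) A G B
  | pair {p1 p2 A1 A2 G1 G2 B1 B2} :
      InIntersect Sgn p1 A1 G1 B1 → InIntersect Sgn p2 A2 G2 B2 →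
      InIntersect Sgn (.pair p1 p2) (.prod A1 A2) (G1 ++ G2) (.prod B1 B2)
  | con {c p0 Ac sc s G B} : declaresCon Sgn c Ac sc → Subsort Sgn sc s →
      InIntersect Sgn p0 Ac G B → InIntersect Sgn (.con c p0) (.sort s) G (.sort sc)

/-- intersect(Σ; A; p), as a set of tracks. -/
def intersect (Sgn : Sig) (A : Ty) (p : Pat) : Set (Ctx × Ty) :=
  { r | InIntersect Sgn p A r.1 r.2 }

/-- Σ ⊢ Γ₊ ≼ Γ : contexts declare the same variables in order, with pointwise subtyping. -/
def CtxStronger (Sgn : Sig) (Gp G : Ctx) : Prop :=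
  List.Forall₂ (fun a b => a.1 = b.1 ∧ Subty Sgn a.2 b.2) Gp G

/-- Σ ⊢ T₊ ≤trk T. -/
def TracksStronger (Sgn : Sig) (Tp T : Set (Ctx × Ty)) : Prop :=
  ∀ r ∈ Tp, ∃ r' ∈ T, CtxStronger Sgn r.1 r'.1 ∧ Subty Sgn r.2 r'.2

/-! ## Expressions -/

mutual
inductive Exp : Type
  | var : Var → Exp
  | lam : Var → Exp → Exp
  | app : Exp → Exp → Exp
  | pair : Exp → Exp → Exp
  | unit : Exp
  | con : ConName → Exp → Exp
  | case_ : Exp → Arms → Exp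
  | declare : Sig → Exp → Exp

inductive Arms : Type
  | nil : Arms
  | cons : Pat → Exp → Arms → Arms
end

inductive IsValue : Exp → Prop
  | var {x} : IsValue (.var x)
  | lam {x e} : IsValue (.lam x e)
  | pair {v1 v2} : IsValue v1 → IsValue v2 → IsValue (.pair v1 v2)
  | unit : IsValue .unit
  | con {c v} : IsValue v → IsValue (.con c v)

/-! ## Substitution -/

mutual
def substE (v : Exp) (x : Var) : Exp → Exp
  | .var y => if y = x then v else .var y
  | .lam y e => if y = x then .lam y e else .lam y (substE v x e)
  | .app e1 e2 => .app (substE v x e1) (substE v x e2)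
  | .pair e1 e2 => .pair (substE v x e1) (substE v x e2)
  | .unit => .unit
  | .con c e => .con c (substE v x e)
  | .case_ e ms => .case_ (substE v x e) (substA v x ms)
  | .declare sg e => .declare sg (substE v x e)

def substA (v : Exp) (x : Var) : Arms → Arms
  | .nil => .nil
  | .cons p e ms =>
      .cons p (if x ∈ p.boundVars then e else substE v x e) (substA v x ms)
end

/-- Apply a substitution θ (a list of value/variable pairs). -/
def applySubst (th : List (Var × Exp)) (e : Exp) : Exp :=
  th.foldl (fun e xv => substE xv.2 xv.1 e) e

/-! ## Pattern matching -/

inductive Matches : Pat → Exp → List (Var × Exp) → Prop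
  | wild {v} : Matches .wild v []
  | as_ {x p v th} : Matches p v th → Matches (.as_ x p) v (th ++ [(x, v)])
  | or1 {p1 p2 v th} : Matches p1 v th → Matches (.or p1 p2) v th
  | or2 {p1 p2 v th} : Matches p2 v th → Matches (.or p1 p2) v th
  | con {c p v th} : Matches p v th → Matches (.con c p) (.con c v) th
  | unit : Matches .unit .unit []
  | pair {p1 p2 v1 v2 th1 th2} : Matches p1 v1 th1 → Matches p2 v2 th2 →
      Matches (.pair p1 p2) (.pair v1 v2) (th1 ++ th2)

inductive NoMatch : Exp → Pat → Prop
  | empty {v} : NoMatch v .empty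
  | as_ {v x p} : NoMatch v p → NoMatch v (.as_ x p)
  | or {v p1 p2} : NoMatch v p1 → NoMatch v p2 → NoMatch v (.or p1 p2)
  | conHead {v c p} : (∀ v', v ≠ .con c v') → NoMatch v (.con c p)
  | conInner {c v p} : NoMatch v p → NoMatch (.con c v) (.con c p)
  | unit {v} : v ≠ .unit → NoMatch v .unit
  | pairHead {v p1 p2} : (∀ v1 v2, v ≠ .pair v1 v2) → NoMatch v (.pair p1 p2)
  | pair1 {v1 v2 p1 p2} : NoMatch v1 p1 → NoMatch (.pair v1 v2) (.pair p1 p2)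
  | pair2 {v1 v2 p1 p2} : NoMatch v2 p2 → NoMatch (.pair v1 v2) (.pair p1 p2)

/-! ## Typing -/

mutual
/-- Σ; Γ ⊢ e : A (type assignment). -/
inductive HasType (Psi : UrSig) : Sig → Ctx → Exp → Ty → Prop
  | var {Sgn G x A} : (x, A) ∈ G → HasType Psi Sgn G (.var x) A
  | sub {Sgn G e A B} : HasType Psi Sgn G e A → Subty Sgn A B → HasType Psi Sgn G e B
  | lam {Sgn G x e A B} : HasType Psi Sgn (G ++ [(x, A)]) e B →
      HasType Psi Sgn G (.lam x e) (.arr A B)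
  | app {Sgn G e1 e2 A B} : HasType Psi Sgn G e1 (.arr A B) → HasType Psi Sgn G e2 A →
      HasType Psi Sgn G (.app e1 e2) B
  | inter {Sgn G v A1 A2} : IsValue v → HasType Psi Sgn G v A1 → HasType Psi Sgn G v A2 →
      HasType Psi Sgn G v (.inter A1 A2)
  | pair {Sgn G e1 e2 A1 A2} : HasType Psi Sgn G e1 A1 → HasType Psi Sgn G e2 A2 →
      HasType Psi Sgn G (.pair e1 e2) (.prod A1 A2)
  | unit {Sgn G} : HasType Psi Sgn G .unit .unit
  | dataI {Sgn G c e A s} : ConTyping Sgn c A s → HasType Psi Sgn G e A →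
      HasType Psi Sgn G (.con c e) (.sort s)
  | dataE {Sgn G e ms A B} : HasType Psi Sgn G e A → MatchType Psi Sgn G A .wild ms B →
      HasType Psi Sgn G (.case_ e ms) B
  | declare {Sgn Sg' G e B} : SigWF Psi (Sgn ++ Sg') → TypeWF Sgn B →
      HasType Psi (Sgn ++ Sg') G e B → HasType Psi Sgn G (.declare Sg' e) B

/-- Σ; Γ; A; p ⊢ ms : D (match typing, with residual pattern p). -/
inductive MatchType (Psi : UrSig) : Sig → Ctx → Ty → Pat → Arms → Ty → Prop
  | nil {Sgn G A p D} : intersect Sgn A p = (∅ : Set (Ctx × Ty)) →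
      MatchType Psi Sgn G A p .nil D
  | cons {Sgn G A p p1 e1 ms D t q np1 q'} :
      Refines Sgn A t → PatType Psi p1 t →
      pinter p p1 = some q →
      (∀ G' B, (G', B) ∈ intersect Sgn A q → HasType Psi Sgn (G ++ G') e1 D) →
      pcomp Psi p1 = some np1 →
      pinter p np1 = some q' →
      MatchType Psi Sgn G A q' ms D →
      MatchType Psi Sgn G A p (.cons p1 e1 ms) D
end

/-- Substitution typing Σ; Γ ⊢ θ : Γ'. -/
inductive SubstType (Psi : UrSig) (Sgn : Sig) (G : Ctx) : List (Var × Exp) → Ctx → Prop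
  | nil : SubstType Psi Sgn G [] []
  | cons {th G' v x A} : SubstType Psi Sgn G th G' → IsValue v → HasType Psi Sgn G v A →
      SubstType Psi Sgn G (th ++ [(x, v)]) (G' ++ [(x, A)])

/-! ## Operational semantics -/

inductive ArmsStep (v : Exp) : Arms → Exp → Prop
  | match_ {p1 e1 ms th} : Matches p1 v th → ArmsStep v (.cons p1 e1 ms) (applySubst th e1)
  | else_ {p1 e1 ms e'} : NoMatch v p1 → ArmsStep v ms e' → ArmsStep v (.cons p1 e1 ms) e'

inductive Step : Exp → Exp → Prop
  | beta {x e v} : IsValue v → Step (.app (.lam x e) v) (substE v x e)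
  | declare {sg e} : Step (.declare sg e) e
  | case_ {v ms e'} : IsValue v → ArmsStep v ms e' → Step (.case_ v ms) e'
  | appL {e1 e1' e2} : Step e1 e1' → Step (.app e1 e2) (.app e1' e2)
  | appR {v e2 e2'} : IsValue v → Step e2 e2' → Step (.app v e2) (.app v e2')
  | conArg {c e e'} : Step e e' → Step (.con c e) (.con c e')
  | pairL {e1 e1' e2} : Step e1 e1' → Step (.pair e1 e2) (.pair e1' e2)
  | pairR {v e2 e2'} : IsValue v → Step e2 e2' → Step (.pair v e2) (.pair v e2')
  | caseScrut {e e' ms} : Step e e' → Step (.case_ e ms) (.case_ e' ms)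

/-! ## Typing derivations in which every type is well-formed under the local signature -/

mutual
inductive HasTypeW (Psi : UrSig) : Sig → Ctx → Exp → Ty → Prop
  | var {Sgn G x A} : (x, A) ∈ G → TypeWF Sgn A → HasTypeW Psi Sgn G (.var x) A
  | sub {Sgn G e A B} : HasTypeW Psi Sgn G e A → Subty Sgn A B → TypeWF Sgn B →
      HasTypeW Psi Sgn G e B
  | lam {Sgn G x e A B} : TypeWF Sgn (.arr A B) → HasTypeW Psi Sgn (G ++ [(x, A)]) e B →
      HasTypeW Psi Sgn G (.lam x e) (.arr A B)
  | app {Sgn G e1 e2 A B} : HasTypeW Psi Sgn G e1 (.arr A B) → HasTypeW Psi Sgn G e2 A →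
      HasTypeW Psi Sgn G (.app e1 e2) B
  | inter {Sgn G v A1 A2} : IsValue v → TypeWF Sgn (.inter A1 A2) →
      HasTypeW Psi Sgn G v A1 → HasTypeW Psi Sgn G v A2 →
      HasTypeW Psi Sgn G v (.inter A1 A2)
  | pair {Sgn G e1 e2 A1 A2} : HasTypeW Psi Sgn G e1 A1 → HasTypeW Psi Sgn G e2 A2 →
      HasTypeW Psi Sgn G (.pair e1 e2) (.prod A1 A2)
  | unit {Sgn G} : HasTypeW Psi Sgn G .unit .unit
  | dataI {Sgn G c e A s} : ConTyping Sgn c A s → TypeWF Sgn A → TypeWF Sgn (.sort s) →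
      HasTypeW Psi Sgn G e A → HasTypeW Psi Sgn G (.con c e) (.sort s)
  | dataE {Sgn G e ms A B} : HasTypeW Psi Sgn G e A → TypeWF Sgn A → TypeWF Sgn B →
      MatchTypeW Psi Sgn G A .wild ms B → HasTypeW Psi Sgn G (.case_ e ms) B
  | declare {Sgn Sg' G e B} : SigWF Psi (Sgn ++ Sg') → TypeWF Sgn B →
      HasTypeW Psi (Sgn ++ Sg') G e B → HasTypeW Psi Sgn G (.declare Sg' e) B

inductive MatchTypeW (Psi : UrSig) : Sig → Ctx → Ty → Pat → Arms → Ty → Prop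
  | nil {Sgn G A p D} : intersect Sgn A p = (∅ : Set (Ctx × Ty)) →
      MatchTypeW Psi Sgn G A p .nil D
  | cons {Sgn G A p p1 e1 ms D t q np1 q'} :
      Refines Sgn A t → PatType Psi p1 t →
      pinter p p1 = some q →
      (∀ G' B, (G', B) ∈ intersect Sgn A q → HasTypeW Psi Sgn (G ++ G') e1 D) →
      pcomp Psi p1 = some np1 →
      pinter p np1 = some q' →
      MatchTypeW Psi Sgn G A q' ms D →
      MatchTypeW Psi Sgn G A p (.cons p1 e1 ms) D
end

/-! ## Annotated expressions and the bidirectional system -/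

mutual
inductive AExp : Type
  | var : Var → AExp
  | lam : Var → AExp → AExp
  | app : AExp → AExp → AExp
  | pair : AExp → AExp → AExp
  | unit : AExp
  | con : ConName → AExp → AExp
  | case_ : AExp → AArms → AExp
  | declare : Sig → AExp → AExp
  | anno : AExp → List Ty → AExp

inductive AArms : Type
  | nil : AArms
  | cons : Pat → AExp → AArms → AArms
end

inductive IsAValue : AExp → Prop
  | var {x} : IsAValue (.var x)
  | lam {x e} : IsAValue (.lam x e)
  | pair {v1 v2} : IsAValue v1 → IsAValue v2 → IsAValue (.pair v1 v2)
  | unit : IsAValue .unit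
  | con {c v} : IsAValue v → IsAValue (.con c v)
  | anno {v As} : IsAValue v → IsAValue (.anno v As)

mutual
/-- |e|: erase all annotations. -/
def eraseE : AExp → Exp
  | .var x => .var x
  | .lam x e => .lam x (eraseE e)
  | .app e1 e2 => .app (eraseE e1) (eraseE e2)
  | .pair e1 e2 => .pair (eraseE e1) (eraseE e2)
  | .unit => .unit
  | .con c e => .con c (eraseE e)
  | .case_ e ms => .case_ (eraseE e) (eraseA ms)
  | .declare sg e => .declare sg (eraseE e)
  | .anno e _ => eraseE e

def eraseA : AArms → Arms
  | .nil => .nil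
  | .cons p e ms => .cons p (eraseE e) (eraseA ms)
end

mutual
/-- Σ; Γ ⊢ e ⇐ A (checking). -/
inductive Chk (Psi : UrSig) : Sig → Ctx → AExp → Ty → Prop
  | sub {Sgn G e A B} : Syn Psi Sgn G e A → Subty Sgn A B → Chk Psi Sgn G e B
  | lam {Sgn G x e A B} : Chk Psi Sgn (G ++ [(x, A)]) e B →
      Chk Psi Sgn G (.lam x e) (.arr A B)
  | inter {Sgn G v A1 A2} : IsAValue v → Chk Psi Sgn G v A1 → Chk Psi Sgn G v A2 →
      Chk Psi Sgn G v (.inter A1 A2)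
  | pair {Sgn G e1 e2 A1 A2} : Chk Psi Sgn G e1 A1 → Chk Psi Sgn G e2 A2 →
      Chk Psi Sgn G (.pair e1 e2) (.prod A1 A2)
  | unit {Sgn G} : Chk Psi Sgn G .unit .unit
  | dataI {Sgn G c e A s} : ConTyping Sgn c A s → Chk Psi Sgn G e A →
      Chk Psi Sgn G (.con c e) (.sort s)
  | dataE {Sgn G e ms A B} : Syn Psi Sgn G e A → MatchChk Psi Sgn G A .wild ms B →
      Chk Psi Sgn G (.case_ e ms) B
  | declare {Sgn Sg' G e B} : SigWF Psi (Sgn ++ Sg') → TypeWF Sgn B →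
      Chk Psi (Sgn ++ Sg') G e B → Chk Psi Sgn G (.declare Sg' e) B

/-- Σ; Γ ⊢ e ⇒ A (synthesis). -/
inductive Syn (Psi : UrSig) : Sig → Ctx → AExp → Ty → Prop
  | var {Sgn G x A} : (x, A) ∈ G → Syn Psi Sgn G (.var x) A
  | anno {Sgn G e As A} : A ∈ As → Chk Psi Sgn G e A → Syn Psi Sgn G (.anno e As) A
  | app {Sgn G e1 e2 A B} : Syn Psi Sgn G e1 (.arr A B) → Chk Psi Sgn G e2 A →
      Syn Psi Sgn G (.app e1 e2) B
  | interE1 {Sgn G e A1 A2} : Syn Psi Sgn G e (.inter A1 A2) → Syn Psi Sgn G e A1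
  | interE2 {Sgn G e A1 A2} : Syn Psi Sgn G e (.inter A1 A2) → Syn Psi Sgn G e A2

/-- Σ; Γ; A; p ⊢ ms ⇐ B (bidirectional match typing). -/
inductive MatchChk (Psi : UrSig) : Sig → Ctx → Ty → Pat → AArms → Ty → Prop
  | nil {Sgn G A p D} : intersect Sgn A p = (∅ : Set (Ctx × Ty)) →
      MatchChk Psi Sgn G A p .nil D
  | cons {Sgn G A p p1 e1 ms D t q np1 q'} :
      Refines Sgn A t → PatType Psi p1 t →
      pinter p p1 = some q →
      (∀ G' B, (G', B) ∈ intersect Sgn A q → Chk Psi Sgn (G ++ G') e1 D) →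
      pcomp Psi p1 = some np1 →
      pinter p np1 = some q' →
      MatchChk Psi Sgn G A q' ms D →
      MatchChk Psi Sgn G A p (.cons p1 e1 ms) D
end
/-! ## Auxiliary lemmas for weakening of block-element safety -/

lemma mem_sigDom {x : SortName} {Sg : Sig} : x ∈ sigDom Sg ↔ ∃ b ∈ Sg, x ∈ b.domS := by
  induction Sg with
  | nil => simp [sigDom]
  | cons b Sg ih =>
      show x ∈ b.domS ++ sigDom Sg ↔ _
      simp [List.mem_append, ih]

lemma sigDom_mono {Sg1 Sg2 : Sig} (h : List.Sublist Sg1 Sg2) :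
    ∀ x ∈ sigDom Sg1, x ∈ sigDom Sg2 := by
  intro x hx
  rw [mem_sigDom] at hx ⊢
  obtain ⟨b, hb, hxb⟩ := hx
  exact ⟨b, h.subset hb, hxb⟩

lemma declaresSub_mono {Sg1 Sg2 : Sig} (h : List.Sublist Sg1 Sg2) {s1 s2 : SortName}
    (hd : declaresSub Sg1 s1 s2) : declaresSub Sg2 s1 s2 := by
  obtain ⟨b, hb, hm⟩ := hd; exact ⟨b, h.subset hb, hm⟩

lemma declaresCon_mono {Sg1 Sg2 : Sig} (h : List.Sublist Sg1 Sg2) {c A s}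
    (hd : declaresCon Sg1 c A s) : declaresCon Sg2 c A s := by
  obtain ⟨b, hb, hm⟩ := hd; exact ⟨b, h.subset hb, hm⟩

lemma declaresSort_mono {Sg1 Sg2 : Sig} (h : List.Sublist Sg1 Sg2) {s d}
    (hd : declaresSort Sg1 s d) : declaresSort Sg2 s d := by
  obtain ⟨b, hb, hm⟩ := hd; exact ⟨b, h.subset hb, hm⟩

lemma subsort_mono {Sg1 Sg2 : Sig} (h : List.Sublist Sg1 Sg2) {s t : SortName}
    (hs : Subsort Sg1 s t) : Subsort Sg2 s t := by
  induction hs with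
  | assum hd => exact .assum (declaresSub_mono h hd)
  | refl hs => exact .refl (sigDom_mono h _ hs)
  | trans _ _ ih1 ih2 => exact .trans ih1 ih2

lemma subty_mono {Sg1 Sg2 : Sig} (h : List.Sublist Sg1 Sg2) {A B : Ty}
    (hs : Subty Sg1 A B) : Subty Sg2 A B := by
  induction hs with
  | unit => exact .unit
  | prod _ _ ih1 ih2 => exact .prod ih1 ih2
  | sort hs => exact .sort (subsort_mono h hs)
  | arr _ _ ih1 ih2 => exact .arr ih1 ih2
  | interL1 _ ih => exact .interL1 ih
  | interL2 _ ih => exact .interL2 ih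
  | interR _ _ ih1 ih2 => exact .interR ih1 ih2

lemma refines_mono {Sg1 Sg2 : Sig} (h : List.Sublist Sg1 Sg2) {A : Ty} {t : UTy}
    (hr : Refines Sg1 A t) : Refines Sg2 A t := by
  induction hr with
  | unit => exact .unit
  | arr _ _ ih1 ih2 => exact .arr ih1 ih2
  | prod _ _ ih1 ih2 => exact .prod ih1 ih2
  | sort hd => exact .sort (declaresSort_mono h hd)
  | inter _ _ ih1 ih2 => exact .inter ih1 ih2

lemma typeWF_mono {Sg1 Sg2 : Sig} (h : List.Sublist Sg1 Sg2) {A : Ty}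
    (hw : TypeWF Sg1 A) : TypeWF Sg2 A := by
  induction hw with
  | unit => exact .unit
  | arr _ _ ih1 ih2 => exact .arr ih1 ih2
  | prod _ _ ih1 ih2 => exact .prod ih1 ih2
  | sort hs => exact .sort (sigDom_mono h _ hs)
  | inter _ _ hr1 hr2 ih1 ih2 =>
      exact .inter ih1 ih2 (refines_mono h hr1) (refines_mono h hr2)

lemma sigwf_snoc_inv {Psi : UrSig} {L : Sig} {b : Block} (h : SigWF Psi (L ++ [b])) :
    SigWF Psi L ∧ (∀ s ∈ b.domS, s ∉ sigDom L) ∧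
      (∀ t1 ∈ sigDom L, ∀ t2 ∈ sigDom L, (Subsort L t1 t2 ↔ Subsort (L ++ [b]) t1 t2)) ∧
      (∀ elem ∈ b.decls, ElemSafe Psi L b elem) := by
  generalize hE : L ++ [b] = LL at h
  cases h with
  | nil => simp at hE
  | @block Sgn blk h1 h2 h3 h4 =>
      have hL : Sgn = L ∧ blk = b := by
        have := congrArg List.reverse hE
        simp at this
        exact ⟨this.2.symm, this.1.symm⟩
      obtain ⟨rfl, rfl⟩ := hL
      exact ⟨h1, h2, h3, h4⟩

lemma sigwf_conserv (Psi : UrSig) (S2 : Sig) : ∀ S1 : Sig, SigWF Psi (S1 ++ S2) →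
    ∀ u v, u ∈ sigDom S1 → v ∈ sigDom S1 → Subsort (S1 ++ S2) u v → Subsort S1 u v := by
  induction S2 using List.reverseRecOn with
  | nil => intro S1 _ u v _ _ hsub; simpa using hsub
  | append_singleton S2' b ih =>
      intro S1 hwf u v hu hv hsub
      rw [← List.append_assoc] at hwf hsub
      obtain ⟨hwf', _, hiff, _⟩ := sigwf_snoc_inv hwf
      have hsl : List.Sublist S1 (S1 ++ S2') := List.sublist_append_left _ _
      have hu' := sigDom_mono hsl _ hu
      have hv' := sigDom_mono hsl _ hv
      exact ih S1 hwf' u v hu hv ((hiff u hu' v hv').mpr hsub)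

lemma sigwf_fresh (Psi : UrSig) (S2 : Sig) : ∀ S1 : Sig, SigWF Psi (S1 ++ S2) →
    ∀ x ∈ sigDom S2, x ∉ sigDom S1 := by
  induction S2 using List.reverseRecOn with
  | nil => intro S1 _ x hx; simp [sigDom] at hx
  | append_singleton S2' b ih =>
      intro S1 hwf x hx
      rw [← List.append_assoc] at hwf
      obtain ⟨hwf', hfresh, _, _⟩ := sigwf_snoc_inv hwf
      rw [mem_sigDom] at hx
      obtain ⟨b', hb', hxb'⟩ := hx
      rcases List.mem_append.mp hb' with hb' | hb'
      · exact ih S1 hwf' x (mem_sigDom.mpr ⟨b', hb', hxb'⟩)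
      · simp at hb'; subst hb'
        intro hxS1
        exact hfresh x hxb' (sigDom_mono (List.sublist_append_left _ _) _ hxS1)

lemma sigwf_declaresSub_dom {Psi : UrSig} {Sg : Sig} (h : SigWF Psi Sg) {u v : SortName}
    (hd : declaresSub Sg u v) : u ∈ sigDom Sg ∧ v ∈ sigDom Sg := by
  induction Sg using List.reverseRecOn with
  | nil => obtain ⟨b, hb, _⟩ := hd; simp at hb
  | append_singleton L b ih =>
      obtain ⟨hwf', _, _, hsafe⟩ := sigwf_snoc_inv h
      obtain ⟨b', hb', hm⟩ := hd
      have hsl : List.Sublist L (L ++ [b]) := List.sublist_append_left _ _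
      rcases List.mem_append.mp hb' with hb' | hb'
      · obtain ⟨h1, h2⟩ := ih hwf' ⟨b', hb', hm⟩
        exact ⟨sigDom_mono hsl _ h1, sigDom_mono hsl _ h2⟩
      · simp at hb'; subst hb'
        have := hsafe _ hm
        simp only [ElemSafe] at this
        obtain ⟨hu, hv⟩ := this
        constructor
        · rcases hu with hu | hu
          · exact sigDom_mono hsl _ hu
          · exact mem_sigDom.mpr ⟨b', by simp, hu⟩
        · rcases hv with hv | hv
          · exact sigDom_mono hsl _ hv
          · exact mem_sigDom.mpr ⟨b', by simp, hv⟩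

lemma mem_sigDom_append {x : SortName} {S1 S2 : Sig} :
    x ∈ sigDom (S1 ++ S2) ↔ x ∈ sigDom S1 ∨ x ∈ sigDom S2 := by
  simp only [mem_sigDom, List.mem_append]
  constructor
  · rintro ⟨b, (h | h), hx⟩
    exacts [Or.inl ⟨b, h, hx⟩, Or.inr ⟨b, h, hx⟩]
  · rintro (⟨b, h, hx⟩ | ⟨b, h, hx⟩)
    exacts [⟨b, Or.inl h, hx⟩, ⟨b, Or.inr h, hx⟩]

/-- Decomposition of subsorting in the widened signature: segments inside `Om`
are bridged through sorts of `Sgn`. -/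
lemma subsort_decomp (Psi : UrSig) (Sgn Sg' Om : Sig) (blk : Block)
    (hWFold : SigWF Psi (Sgn ++ Sg')) (hWFom : SigWF Psi (Sgn ++ Om))
    (h3 : ∀ x ∈ sigDom Sg', x ∉ sigDom Om)
    (h5 : ∀ d ∈ blk.decls, ∀ x ∈ Decl.mentions d, x ∉ sigDom Om) :
    ∀ a b, Subsort (Sgn ++ Om ++ Sg' ++ [blk]) a b →
      ((a ∉ sigDom Om → b ∉ sigDom Om → Subsort (Sgn ++ Sg' ++ [blk]) a b) ∧
       (a ∉ sigDom Om → b ∈ sigDom Om → ∃ g, g ∈ sigDom Sgn ∧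
          Subsort (Sgn ++ Sg' ++ [blk]) a g ∧ Subsort (Sgn ++ Om) g b) ∧
       (a ∈ sigDom Om → b ∉ sigDom Om → ∃ g, g ∈ sigDom Sgn ∧
          Subsort (Sgn ++ Om) a g ∧ Subsort (Sgn ++ Sg' ++ [blk]) g b) ∧
       (a ∈ sigDom Om → b ∈ sigDom Om → (Subsort (Sgn ++ Om) a b ∨
          ∃ g g', g ∈ sigDom Sgn ∧ g' ∈ sigDom Sgn ∧ Subsort (Sgn ++ Om) a g ∧
            Subsort (Sgn ++ Sg' ++ [blk]) g g' ∧ Subsort (Sgn ++ Om) g' b))) := by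
  have slSgnOld : List.Sublist Sgn (Sgn ++ Sg' ++ [blk]) :=
    (List.sublist_append_left Sgn Sg').trans (List.sublist_append_left _ [blk])
  have hSgnOm : ∀ x ∈ sigDom Om, x ∉ sigDom Sgn := sigwf_fresh Psi Om Sgn hWFom
  have hOldOm : ∀ x ∈ sigDom (Sgn ++ Sg'), x ∉ sigDom Om := by
    intro x hx
    rcases mem_sigDom_append.mp hx with h | h
    · exact fun hO => hSgnOm x hO h
    · exact h3 x h
  have conserv : ∀ u v, u ∈ sigDom Sgn → v ∈ sigDom Sgn →
      Subsort (Sgn ++ Om) u v → Subsort (Sgn ++ Sg' ++ [blk]) u v := by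
    intro u v hu hv hs
    exact subsort_mono slSgnOld (sigwf_conserv Psi Om Sgn hWFom u v hu hv hs)
  intro a b hsub
  induction hsub with
  | @assum a b hd =>
      obtain ⟨bb, hbb, hm⟩ := hd
      simp only [List.mem_append, List.mem_singleton] at hbb
      rcases hbb with ((hbb | hbb) | hbb) | hbb
      · -- block of Sgn
        have hdo : declaresSub (Sgn ++ Sg') a b := ⟨bb, List.mem_append.mpr (Or.inl hbb), hm⟩
        obtain ⟨ha, hb⟩ := sigwf_declaresSub_dom hWFold hdo
        have haO := hOldOm a ha
        have hbO := hOldOm b hb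
        have hss : Subsort (Sgn ++ Sg' ++ [blk]) a b :=
          .assum (declaresSub_mono (List.sublist_append_left _ [blk]) hdo)
        exact ⟨fun _ _ => hss, fun _ h => absurd h hbO, fun h _ => absurd h haO,
          fun h _ => absurd h haO⟩
      · -- block of Om
        have hdo : declaresSub (Sgn ++ Om) a b := ⟨bb, List.mem_append.mpr (Or.inr hbb), hm⟩
        obtain ⟨ha, hb⟩ := sigwf_declaresSub_dom hWFom hdo
        refine ⟨?_, ?_, ?_, fun _ _ => Or.inl (.assum hdo)⟩
        · intro haO hbO
          have haS : a ∈ sigDom Sgn := (mem_sigDom_append.mp ha).resolve_right haO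
          have hbS : b ∈ sigDom Sgn := (mem_sigDom_append.mp hb).resolve_right hbO
          exact conserv a b haS hbS (.assum hdo)
        · intro haO _
          have haS : a ∈ sigDom Sgn := (mem_sigDom_append.mp ha).resolve_right haO
          exact ⟨a, haS, .refl (sigDom_mono slSgnOld _ haS), .assum hdo⟩
        · intro _ hbO
          have hbS : b ∈ sigDom Sgn := (mem_sigDom_append.mp hb).resolve_right hbO
          exact ⟨b, hbS, .assum hdo, .refl (sigDom_mono slSgnOld _ hbS)⟩
      · -- block of Sg'
        have hdo : declaresSub (Sgn ++ Sg') a b := ⟨bb, List.mem_append.mpr (Or.inr hbb), hm⟩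
        obtain ⟨ha, hb⟩ := sigwf_declaresSub_dom hWFold hdo
        have haO := hOldOm a ha
        have hbO := hOldOm b hb
        have hss : Subsort (Sgn ++ Sg' ++ [blk]) a b :=
          .assum (declaresSub_mono (List.sublist_append_left _ [blk]) hdo)
        exact ⟨fun _ _ => hss, fun _ h => absurd h hbO, fun h _ => absurd h haO,
          fun h _ => absurd h haO⟩
      · -- the block blk itself
        subst hbb
        have haO : a ∉ sigDom Om := h5 _ hm a (by simp [Decl.mentions])
        have hbO : b ∉ sigDom Om := h5 _ hm b (by simp [Decl.mentions])
        have hss : Subsort (Sgn ++ Sg' ++ [bb]) a b :=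
          .assum ⟨bb, by simp, hm⟩
        exact ⟨fun _ _ => hss, fun _ h => absurd h hbO, fun h _ => absurd h haO,
          fun h _ => absurd h haO⟩
  | @refl a ha =>
      refine ⟨?_, fun h h' => absurd h' h, fun h h' => absurd h h', ?_⟩
      · intro haO _
        have : a ∈ sigDom (Sgn ++ Sg' ++ [blk]) := by
          rcases mem_sigDom_append.mp ha with h | h
          · rcases mem_sigDom_append.mp h with h | h
            · rcases mem_sigDom_append.mp h with h | h
              · exact mem_sigDom_append.mpr (Or.inl (mem_sigDom_append.mpr (Or.inl h)))
              · exact absurd h haO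
            · exact mem_sigDom_append.mpr (Or.inl (mem_sigDom_append.mpr (Or.inr h)))
          · exact mem_sigDom_append.mpr (Or.inr h)
        exact .refl this
      · intro haO _
        exact Or.inl (.refl (mem_sigDom_append.mpr (Or.inr haO)))
  | @trans s1 s2 s3 h12 h23 ih1 ih2 =>
      by_cases h2 : s2 ∈ sigDom Om
      · refine ⟨?_, ?_, ?_, ?_⟩
        · intro h1 h3'
          obtain ⟨g, hg, o1, m1⟩ := ih1.2.1 h1 h2
          obtain ⟨g', hg', m2, o2⟩ := ih2.2.2.1 h2 h3'
          exact (o1.trans (conserv g g' hg hg' (m1.trans m2))).trans o2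
        · intro h1 h3'
          obtain ⟨g, hg, o1, m1⟩ := ih1.2.1 h1 h2
          rcases ih2.2.2.2 h2 h3' with m | ⟨k, k', hk, hk', ma, ob, mb⟩
          · exact ⟨g, hg, o1, m1.trans m⟩
          · exact ⟨k', hk', (o1.trans (conserv g k hg hk (m1.trans ma))).trans ob, mb⟩
        · intro h1 h3'
          obtain ⟨g, hg, m2, o2⟩ := ih2.2.2.1 h2 h3'
          rcases ih1.2.2.2 h1 h2 with m | ⟨k, k', hk, hk', ma, ob, mb⟩
          · exact ⟨g, hg, m.trans m2, o2⟩
          · exact ⟨k, hk, ma, (ob.trans (conserv k' g hk' hg (mb.trans m2))).trans o2⟩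
        · intro h1 h3'
          rcases ih1.2.2.2 h1 h2 with m1 | ⟨k1, k1', hk1, hk1', ma1, ob1, mb1⟩ <;>
            rcases ih2.2.2.2 h2 h3' with m2 | ⟨k2, k2', hk2, hk2', ma2, ob2, mb2⟩
          · exact Or.inl (m1.trans m2)
          · exact Or.inr ⟨k2, k2', hk2, hk2', m1.trans ma2, ob2, mb2⟩
          · exact Or.inr ⟨k1, k1', hk1, hk1', ma1, ob1, mb1.trans m2⟩
          · exact Or.inr ⟨k1, k2', hk1, hk2', ma1,
              (ob1.trans (conserv k1' k2 hk1' hk2 (mb1.trans ma2))).trans ob2, mb2⟩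
      · refine ⟨?_, ?_, ?_, ?_⟩
        · intro h1 h3'
          exact (ih1.1 h1 h2).trans (ih2.1 h2 h3')
        · intro h1 h3'
          obtain ⟨g, hg, o2, m2⟩ := ih2.2.1 h2 h3'
          exact ⟨g, hg, (ih1.1 h1 h2).trans o2, m2⟩
        · intro h1 h3'
          obtain ⟨g, hg, m1, o1⟩ := ih1.2.2.1 h1 h2
          exact ⟨g, hg, m1, o1.trans (ih2.1 h2 h3')⟩
        · intro h1 h3'
          obtain ⟨g, hg, m1, o1⟩ := ih1.2.2.1 h1 h2
          obtain ⟨g', hg', o2, m2⟩ := ih2.2.1 h2 h3'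
          exact Or.inr ⟨g, g', hg, hg', m1, o1.trans o2, m2⟩

/-- **Weakening of block-element safety** (Statement 2). -/
theorem block_elem_safety_weakening (Psi : UrSig) (Sgn Sg' Om : Sig) (blk : Block)
    (c : ConName) (A : Ty) (s : SortName)
    (h1 : SigWF Psi (Sgn ++ Sg')) (h2 : SigWF Psi (Sgn ++ Om))
    (h3 : ∀ x ∈ sigDom Sg', x ∉ sigDom Om)
    (h4 : ∀ x ∈ sigDom (Sgn ++ Om ++ Sg'), x ∉ blk.domS)
    (h5 : ∀ d ∈ blk.decls, ∀ x ∈ Decl.mentions d, x ∉ sigDom Om)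
    (h6 : PreservesSub (Sgn ++ Sg') [blk])
    (h7 : Decl.con c A s ∈ blk.decls)
    (h8 : ElemSafe Psi (Sgn ++ Sg') blk (Decl.con c A s)) :
    ElemSafe Psi (Sgn ++ Om ++ Sg') blk (Decl.con c A s) := by
  obtain ⟨hs_dom, hcontype, hsafe⟩ := h8
  have slOB : List.Sublist (Sgn ++ Sg') (Sgn ++ Om ++ Sg') :=
    (List.sublist_append_left Sgn Om).append (List.Sublist.refl Sg')
  have slOBb : List.Sublist (Sgn ++ Sg' ++ [blk]) (Sgn ++ Om ++ Sg' ++ [blk]) :=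
    slOB.append (List.Sublist.refl [blk])
  have slSOB : List.Sublist (Sgn ++ Om) (Sgn ++ Om ++ Sg' ++ [blk]) :=
    (List.sublist_append_left (Sgn ++ Om) Sg').trans (List.sublist_append_left _ [blk])
  refine ⟨hs_dom, ?_, ?_⟩
  · obtain ⟨hA, hsWF, t, d, htyp, href⟩ := hcontype
    exact ⟨typeWF_mono slOBb hA, typeWF_mono slOBb hsWF, t, d, htyp,
      refines_mono slOBb href⟩
  · intro t ht hsub
    have hsO : s ∉ sigDom Om := by
      intro hO
      exact h4 s (mem_sigDom_append.mpr
        (Or.inl (mem_sigDom_append.mpr (Or.inr hO)))) hs_dom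
    have hdec := subsort_decomp Psi Sgn Sg' Om blk h1 h2 h3 h5 s t hsub
    by_cases htO : t ∈ sigDom Om
    · obtain ⟨g, hg, hog, hmg⟩ := hdec.2.1 hsO htO
      obtain ⟨A', s', hdc, hs'g, hss', hAA'⟩ :=
        hsafe g (mem_sigDom_append.mpr (Or.inl hg)) hog
      exact ⟨A', s', declaresCon_mono slOB hdc,
        (subsort_mono slOBb hs'g).trans (subsort_mono slSOB hmg),
        subsort_mono slOBb hss', subty_mono slOBb hAA'⟩
    · have hot : Subsort (Sgn ++ Sg' ++ [blk]) s t := hdec.1 hsO htO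
      have htOld : t ∈ sigDom (Sgn ++ Sg') := by
        rcases mem_sigDom_append.mp ht with h | h
        · rcases mem_sigDom_append.mp h with h | h
          · exact mem_sigDom_append.mpr (Or.inl h)
          · exact absurd h htO
        · exact mem_sigDom_append.mpr (Or.inr h)
      obtain ⟨A', s', hdc, hs't, hss', hAA'⟩ := hsafe t htOld hot
      exact ⟨A', s', declaresCon_mono slOB hdc, subsort_mono slOBb hs't,
        subsort_mono slOBb hss', subty_mono slOBb hAA'⟩
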